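/- arXiv:2406.19974 — 3 statements merged into one kernel-verified Lean document; each statement's English description precedes it below -/
import Mathlib

section
/- Let p be a probability density function on ℝ^d, f : ℝ^d → ℝ a nonnegative measurable function with μ = ∫ f(x) p(x) dx ∈ (0, ∞), and q a strictly positive probability density with ∫ (f(x)p(x))²/q(x) dx < ∞ and ∫ p(x)²/q(x) dx < ∞. Define q₁*(x) = f(x)p(x)/μ and q₂*(x) = p(x). Then the relative asymptotic variance of the self-normalized importance sampling estimator satisfies the decomposition μ⁻² ∫ p(x)² (f(x) − μ)² / q(x) dx = χ²(q₁* ‖ q) + χ²(q₂* ‖ q) − 2 ( ∫ q₁*(x) q₂*(x) / q(x) dx − 1 ). -/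
open MeasureTheory

/-- The chi-squared (Pearson) divergence between two densities on `ℝ^d`:
`χ²(p₁‖p₂) = ∫ p₁(x)²/p₂(x) dx − 1`. -/
noncomputable def chiSq {d : ℕ} (p₁ p₂ : (Fin d → ℝ) → ℝ) : ℝ :=
  (∫ x, (p₁ x) ^ 2 / p₂ x) - 1

/-- **Decomposition of the relative asymptotic variance of SNIS.**
With `q₁*(x) = f(x)p(x)/μ` and `q₂*(x) = p(x)`,
`μ⁻² ∫ p²(f−μ)²/q = χ²(q₁*‖q) + χ²(q₂*‖q) − 2(∫ q₁* q₂*/q − 1)`. -/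
theorem snis_asymptotic_variance_decomposition
    {d : ℕ} (p f q : (Fin d → ℝ) → ℝ)
    (hp_meas : Measurable p) (hp_nonneg : ∀ x, 0 ≤ p x) (hp_int : ∫ x, p x = 1)
    (hf_meas : Measurable f) (hf_nonneg : ∀ x, 0 ≤ f x)
    (hfp_int : Integrable (fun x => f x * p x) volume)
    (μ : ℝ) (hμ : μ = ∫ x, f x * p x) (hμ_pos : 0 < μ)
    (hq_meas : Measurable q) (hq_pos : ∀ x, 0 < q x) (hq_int : ∫ x, q x = 1)
    (hint₁ : Integrable (fun x => (f x * p x) ^ 2 / q x) volume)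
    (hint₂ : Integrable (fun x => (p x) ^ 2 / q x) volume) :
    (1 / μ ^ 2) * ∫ x, (p x) ^ 2 * (f x - μ) ^ 2 / q x
      = chiSq (fun x => f x * p x / μ) q + chiSq p q
        - 2 * ((∫ x, (f x * p x / μ) * p x / q x) - 1) := by
  have hμ_ne : μ ≠ 0 := ne_of_gt hμ_pos
  -- integrability of the cross term
  have hcross_meas : Measurable (fun x => f x * p x * p x / q x) :=
    (((hf_meas.mul hp_meas).mul hp_meas).div hq_meas)
  have hcross : Integrable (fun x => f x * p x * p x / q x) volume := by
    apply Integrable.mono' ((hint₁.add hint₂).const_mul (1/2))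
      hcross_meas.aestronglyMeasurable
    filter_upwards with x
    have hq := hq_pos x
    have hnn : 0 ≤ f x * p x * p x / q x :=
      div_nonneg (mul_nonneg (mul_nonneg (hf_nonneg x) (hp_nonneg x)) (hp_nonneg x)) hq.le
    rw [Real.norm_of_nonneg hnn]
    have hab : f x * p x * p x ≤ (1/2) * ((f x * p x)^2 + (p x)^2) := by
      nlinarith [sq_nonneg (f x * p x - p x)]
    simp only [Pi.add_apply]
    rw [← add_div, ← mul_div_assoc]
    gcongr
  -- pointwise expansion
  have hexp : (fun x => (p x) ^ 2 * (f x - μ) ^ 2 / q x)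
      = (fun x => ((f x * p x) ^ 2 / q x - 2 * μ * (f x * p x * p x / q x))
          + μ ^ 2 * ((p x) ^ 2 / q x)) := by
    funext x
    have hq := (hq_pos x).ne'
    field_simp
    ring
  rw [hexp]
  have hA : Integrable (fun x => (f x * p x) ^ 2 / q x - 2 * μ * (f x * p x * p x / q x))
      volume := hint₁.sub (hcross.const_mul (2*μ))
  have hB : Integrable (fun x => μ ^ 2 * ((p x) ^ 2 / q x)) volume := hint₂.const_mul _
  rw [integral_add hA hB, integral_sub hint₁ (hcross.const_mul (2*μ)),
    integral_const_mul, integral_const_mul]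
  -- rewrite the chiSq integrals
  have h1 : (∫ x, (f x * p x / μ) ^ 2 / q x)
      = (1/μ^2) * ∫ x, (f x * p x) ^ 2 / q x := by
    rw [← integral_const_mul]
    congr 1; funext x
    field_simp
  have h2 : (∫ x, (f x * p x / μ) * p x / q x)
      = (1/μ) * ∫ x, f x * p x * p x / q x := by
    rw [← integral_const_mul]
    congr 1; funext x
    field_simp
  simp only [chiSq, h1, h2]
  field_simp
  ring
end

section
/- Let Q be a probability measure on ℝ^d × ℝ^d whose marginals have strictly positive densities q₁ and q₂, and let q₁*, q₂* be probability densities on ℝ^d such that w₁(x₁) = q₁*(x₁)/q₁(x₁) and w₂(x₂) = q₂*(x₂)/q₂(x₂) are square-integrable under the respective marginals. Then the relative asymptotic variance of the generalized SNIS estimator is lower bounded as E_Q[(w₁(x₁) − w₂(x₂))²] ≥ ( √χ²(q₂* ‖ q₂) − √χ²(q₁* ‖ q₁) )², and the lower bound does not depend on the joint Q but only on the marginals q₁, q₂. -/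
open MeasureTheory
open scoped ENNReal NNReal

private lemma abs_mul_abs_le_aux (a b : ℝ) : |a| * |b| ≤ (a ^ 2 + b ^ 2) / 2 := by
  nlinarith [sq_nonneg (|a| - |b|), sq_abs a, sq_abs b, abs_nonneg a, abs_nonneg b]

private lemma integral_withDensity_aux {d : ℕ} (q : (Fin d → ℝ) → ℝ) (hq : Measurable q)
    (hqpos : ∀ x, 0 < q x) (g : (Fin d → ℝ) → ℝ) :
    ∫ x, g x ∂(volume.withDensity fun x => ENNReal.ofReal (q x)) = ∫ x, q x * g x := by
  rw [show (fun x => ENNReal.ofReal (q x)) = (fun x => ((fun y => (q y).toNNReal) x : ℝ≥0∞))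
      from rfl,
    integral_withDensity_eq_integral_smul (by measurability) g]
  congr 1; ext x
  simp [NNReal.smul_def, Real.coe_toNNReal _ (hqpos x).le]

/-- **Lower bound on the relative asymptotic variance of the generalized SNIS estimator.**
For any joint proposal `Q` on `ℝ^d × ℝ^d` with marginal densities `q₁, q₂`, and weights
`wᵢ = qᵢ*/qᵢ` square-integrable under the respective marginals,
`E_Q[(w₁(x₁) − w₂(x₂))²] ≥ (√χ²(q₂*‖q₂) − √χ²(q₁*‖q₁))²`;
the lower bound depends only on the marginals, not on the joint `Q`. -/
theorem gensnis_asymptotic_variance_lower_bound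
    {d : ℕ}
    (Q : Measure ((Fin d → ℝ) × (Fin d → ℝ))) [IsProbabilityMeasure Q]
    (q₁ q₂ qs₁ qs₂ : (Fin d → ℝ) → ℝ)
    (hq₁_meas : Measurable q₁) (hq₁_pos : ∀ x, 0 < q₁ x)
    (hq₂_meas : Measurable q₂) (hq₂_pos : ∀ x, 0 < q₂ x)
    (hQ₁ : Q.map Prod.fst = volume.withDensity (fun x => ENNReal.ofReal (q₁ x)))
    (hQ₂ : Q.map Prod.snd = volume.withDensity (fun x => ENNReal.ofReal (q₂ x)))
    (hqs₁_meas : Measurable qs₁) (hqs₁_nonneg : ∀ x, 0 ≤ qs₁ x) (hqs₁_int : ∫ x, qs₁ x = 1)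
    (hqs₂_meas : Measurable qs₂) (hqs₂_nonneg : ∀ x, 0 ≤ qs₂ x) (hqs₂_int : ∫ x, qs₂ x = 1)
    (hw₁ : Integrable (fun x => (qs₁ x / q₁ x) ^ 2) (Q.map Prod.fst))
    (hw₂ : Integrable (fun x => (qs₂ x / q₂ x) ^ 2) (Q.map Prod.snd)) :
    (Real.sqrt (chiSq qs₂ q₂) - Real.sqrt (chiSq qs₁ q₁)) ^ 2
      ≤ ∫ z, (qs₁ z.1 / q₁ z.1 - qs₂ z.2 / q₂ z.2) ^ 2 ∂Q := by
  set w₁ : (Fin d → ℝ) → ℝ := fun x => qs₁ x / q₁ x with hw₁def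
  set w₂ : (Fin d → ℝ) → ℝ := fun x => qs₂ x / q₂ x with hw₂def
  have hw₁_meas : Measurable w₁ := hqs₁_meas.div hq₁_meas
  have hw₂_meas : Measurable w₂ := hqs₂_meas.div hq₂_meas
  set F : ((Fin d → ℝ) × (Fin d → ℝ)) → ℝ := fun z => w₁ z.1 with hFdef
  set G : ((Fin d → ℝ) × (Fin d → ℝ)) → ℝ := fun z => w₂ z.2 with hGdef
  have hF_meas : Measurable F := hw₁_meas.comp measurable_fst
  have hG_meas : Measurable G := hw₂_meas.comp measurable_snd
  -- integrals of F, F², G, G²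
  have hmapF : ∀ g : (Fin d → ℝ) → ℝ, Measurable g →
      ∫ z, g z.1 ∂Q = ∫ x, q₁ x * g x := by
    intro g hg
    rw [← integral_map measurable_fst.aemeasurable hg.aestronglyMeasurable, hQ₁,
      integral_withDensity_aux q₁ hq₁_meas hq₁_pos g]
  have hmapG : ∀ g : (Fin d → ℝ) → ℝ, Measurable g →
      ∫ z, g z.2 ∂Q = ∫ x, q₂ x * g x := by
    intro g hg
    rw [← integral_map measurable_snd.aemeasurable hg.aestronglyMeasurable, hQ₂,
      integral_withDensity_aux q₂ hq₂_meas hq₂_pos g]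
  have hEF : ∫ z, F z ∂Q = 1 := by
    rw [hmapF w₁ hw₁_meas, ← hqs₁_int]
    congr 1; ext x
    simp only [hw₁def]
    field_simp [hw₁def, (hq₁_pos x).ne']
  have hEG : ∫ z, G z ∂Q = 1 := by
    rw [hmapG w₂ hw₂_meas, ← hqs₂_int]
    congr 1; ext x
    simp only [hw₂def]
    field_simp [hw₂def, (hq₂_pos x).ne']
  have hEF2 : ∫ z, F z ^ 2 ∂Q = chiSq qs₁ q₁ + 1 := by
    rw [show (fun z => F z ^ 2) = (fun z => (fun x => w₁ x ^ 2) z.1) from rfl,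
      hmapF (fun x => w₁ x ^ 2) (hw₁_meas.pow_const 2)]
    unfold chiSq
    rw [show ((∫ x, qs₁ x ^ 2 / q₁ x) - 1) + 1 = ∫ x, qs₁ x ^ 2 / q₁ x by ring]
    congr 1; ext x
    simp only [hw₁def]
    field_simp [hw₁def, (hq₁_pos x).ne']
  have hEG2 : ∫ z, G z ^ 2 ∂Q = chiSq qs₂ q₂ + 1 := by
    rw [show (fun z => G z ^ 2) = (fun z => (fun x => w₂ x ^ 2) z.2) from rfl,
      hmapG (fun x => w₂ x ^ 2) (hw₂_meas.pow_const 2)]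
    unfold chiSq
    rw [show ((∫ x, qs₂ x ^ 2 / q₂ x) - 1) + 1 = ∫ x, qs₂ x ^ 2 / q₂ x by ring]
    congr 1; ext x
    simp only [hw₂def]
    field_simp [hw₂def, (hq₂_pos x).ne']
  -- integrability
  have hF2_int : Integrable (fun z => F z ^ 2) Q := by
    have := (integrable_map_measure ((hw₁_meas.pow_const 2).aestronglyMeasurable)
      measurable_fst.aemeasurable).mp hw₁
    exact this
  have hG2_int : Integrable (fun z => G z ^ 2) Q := by
    have := (integrable_map_measure ((hw₂_meas.pow_const 2).aestronglyMeasurable)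
      measurable_snd.aemeasurable).mp hw₂
    exact this
  have hFmem : MemLp F 2 Q :=
    (memLp_two_iff_integrable_sq hF_meas.aestronglyMeasurable).2 hF2_int
  have hGmem : MemLp G 2 Q :=
    (memLp_two_iff_integrable_sq hG_meas.aestronglyMeasurable).2 hG2_int
  have hF_int : Integrable F Q := hFmem.integrable one_le_two
  have hG_int : Integrable G Q := hGmem.integrable one_le_two
  -- centered functions
  set F' : ((Fin d → ℝ) × (Fin d → ℝ)) → ℝ := fun z => F z - 1 with hF'def
  set G' : ((Fin d → ℝ) × (Fin d → ℝ)) → ℝ := fun z => G z - 1 with hG'def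
  have hF'mem : MemLp F' 2 Q := hFmem.sub (memLp_const 1)
  have hG'mem : MemLp G' 2 Q := hGmem.sub (memLp_const 1)
  have hF'2_int : Integrable (fun z => F' z ^ 2) Q := hF'mem.integrable_sq
  have hG'2_int : Integrable (fun z => G' z ^ 2) Q := hG'mem.integrable_sq
  have hF'G'_int : Integrable (fun z => F' z * G' z) Q := by
    refine Integrable.mono' ((hF'2_int.add hG'2_int).div_const 2)
      (hF'mem.aestronglyMeasurable.mul hG'mem.aestronglyMeasurable)
      (ae_of_all _ fun z => ?_)
    rw [Real.norm_eq_abs, abs_mul]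
    simp only [Pi.add_apply]
    exact abs_mul_abs_le_aux _ _
  -- values of centered second moments
  have hA' : ∫ z, F' z ^ 2 ∂Q = chiSq qs₁ q₁ := by
    have : (fun z => F' z ^ 2) = fun z => F z ^ 2 - 2 * F z + 1 := by
      ext z; simp only [hF'def]; ring
    have h1 : Integrable (fun z => F z ^ 2 - 2 * F z) Q := hF2_int.sub (hF_int.const_mul 2)
    rw [this, integral_add h1 (integrable_const 1),
      integral_sub hF2_int (hF_int.const_mul 2), integral_const_mul, hEF, hEF2]
    simp [measure_univ]
    ring
  have hB' : ∫ z, G' z ^ 2 ∂Q = chiSq qs₂ q₂ := by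
    have : (fun z => G' z ^ 2) = fun z => G z ^ 2 - 2 * G z + 1 := by
      ext z; simp only [hG'def]; ring
    have h1 : Integrable (fun z => G z ^ 2 - 2 * G z) Q := hG2_int.sub (hG_int.const_mul 2)
    rw [this, integral_add h1 (integrable_const 1),
      integral_sub hG2_int (hG_int.const_mul 2), integral_const_mul, hEG, hEG2]
    simp [measure_univ]
    ring
  have hA'_nonneg : 0 ≤ ∫ z, F' z ^ 2 ∂Q := integral_nonneg fun z => sq_nonneg _
  have hB'_nonneg : 0 ≤ ∫ z, G' z ^ 2 ∂Q := integral_nonneg fun z => sq_nonneg _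
  -- Cauchy–Schwarz
  have hCS : ∫ z, F' z * G' z ∂Q ≤
      Real.sqrt (∫ z, F' z ^ 2 ∂Q) * Real.sqrt (∫ z, G' z ^ 2 ∂Q) := by
    have habs : ∫ z, F' z * G' z ∂Q ≤ ∫ z, |F' z| * |G' z| ∂Q := by
      refine integral_mono hF'G'_int ?_ fun z => ?_
      · have := hF'G'_int.abs
        simpa [abs_mul] using this
      · rw [← abs_mul]; exact le_abs_self _
    have hconj : Real.HolderConjugate 2 2 := Real.HolderConjugate.two_two
    have hFabs : MemLp (fun z => |F' z|) (ENNReal.ofReal 2) Q := by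
      have h2 : (ENNReal.ofReal 2) = (2 : ℝ≥0∞) := by norm_num
      rw [h2]
      simpa [Real.norm_eq_abs] using hF'mem.norm
    have hGabs : MemLp (fun z => |G' z|) (ENNReal.ofReal 2) Q := by
      have h2 : (ENNReal.ofReal 2) = (2 : ℝ≥0∞) := by norm_num
      rw [h2]
      simpa [Real.norm_eq_abs] using hG'mem.norm
    have := integral_mul_le_Lp_mul_Lq_of_nonneg hconj
      (ae_of_all _ fun z => abs_nonneg (F' z)) (ae_of_all _ fun z => abs_nonneg (G' z))
      hFabs hGabs
    have heq1 : ∫ z, |F' z| ^ (2 : ℝ) ∂Q = ∫ z, F' z ^ 2 ∂Q := by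
      congr 1; ext z
      rw [show ((2 : ℝ) = ((2 : ℕ) : ℝ)) by norm_num, Real.rpow_natCast, sq_abs]
    have heq2 : ∫ z, |G' z| ^ (2 : ℝ) ∂Q = ∫ z, G' z ^ 2 ∂Q := by
      congr 1; ext z
      rw [show ((2 : ℝ) = ((2 : ℕ) : ℝ)) by norm_num, Real.rpow_natCast, sq_abs]
    rw [heq1, heq2] at this
    calc ∫ z, F' z * G' z ∂Q ≤ ∫ z, |F' z| * |G' z| ∂Q := habs
      _ ≤ (∫ z, F' z ^ 2 ∂Q) ^ ((1:ℝ) / 2) * (∫ z, G' z ^ 2 ∂Q) ^ ((1:ℝ) / 2) := this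
      _ = Real.sqrt (∫ z, F' z ^ 2 ∂Q) * Real.sqrt (∫ z, G' z ^ 2 ∂Q) := by
          rw [Real.sqrt_eq_rpow, Real.sqrt_eq_rpow]
  -- expansion of the objective
  have hexp : ∫ z, (qs₁ z.1 / q₁ z.1 - qs₂ z.2 / q₂ z.2) ^ 2 ∂Q
      = (∫ z, F' z ^ 2 ∂Q) - 2 * (∫ z, F' z * G' z ∂Q) + ∫ z, G' z ^ 2 ∂Q := by
    have hpt : (fun z : (Fin d → ℝ) × (Fin d → ℝ) =>
        (qs₁ z.1 / q₁ z.1 - qs₂ z.2 / q₂ z.2) ^ 2)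
        = fun z => F' z ^ 2 - 2 * (F' z * G' z) + G' z ^ 2 := by
      ext z; simp only [hF'def, hG'def, hFdef, hGdef, hw₁def, hw₂def]; ring
    have h1 : Integrable (fun z => F' z ^ 2 - 2 * (F' z * G' z)) Q :=
      hF'2_int.sub (hF'G'_int.const_mul 2)
    rw [hpt, integral_add h1 hG'2_int,
      integral_sub hF'2_int (hF'G'_int.const_mul 2), integral_const_mul]
  rw [hexp, ← hA', ← hB']
  nlinarith [Real.sq_sqrt hA'_nonneg, Real.sq_sqrt hB'_nonneg, hCS,
    Real.sqrt_nonneg (∫ z, F' z ^ 2 ∂Q), Real.sqrt_nonneg (∫ z, G' z ^ 2 ∂Q)]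
end

section
/- For μ ∈ ℝ^d and a symmetric positive definite d × d real matrix Σ, let N(x; μ, Σ) = det(2πΣ)^{−1/2} exp(−(1/2)(x − μ)ᵀ Σ⁻¹ (x − μ)). Let μ_A, μ_B ∈ ℝ^d and Σ_A, Σ_B be symmetric positive definite with 2Σ_B − Σ_A positive definite. Then the chi-squared divergence between the two Gaussian densities has the closed form χ²( N(·; μ_A, Σ_A) ‖ N(·; μ_B, Σ_B) ) = ∫ N(x; μ_A, Σ_A)² / N(x; μ_B, Σ_B) dx − 1 = det(Σ_B) / √( det(2Σ_B − Σ_A) · det(Σ_A) ) · exp( (μ_A − μ_B)ᵀ (2Σ_B − Σ_A)⁻¹ (μ_A − μ_B) ) − 1. -/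
open Matrix MeasureTheory
open Real
lemma transposeEq {d : ℕ} {A : Matrix (Fin d) (Fin d) ℝ} (h : A.IsHermitian) : Aᵀ = A := by
  ext i j
  have := congrFun (congrFun h i) j
  simpa [Matrix.conjTranspose_apply] using this

lemma dot_symm {d : ℕ} {A : Matrix (Fin d) (Fin d) ℝ} (h : Aᵀ = A) (u v : Fin d → ℝ) :
    u ⬝ᵥ A *ᵥ v = v ⬝ᵥ A *ᵥ u := by
  rw [dotProduct_mulVec, ← Matrix.mulVec_transpose, h, dotProduct_comm]

lemma dot_mulVec_left {d : ℕ} (N : Matrix (Fin d) (Fin d) ℝ) (u w : Fin d → ℝ) :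
    (N *ᵥ u) ⬝ᵥ w = u ⬝ᵥ (Nᵀ *ᵥ w) := by
  rw [dotProduct_comm, dotProduct_mulVec, ← Matrix.mulVec_transpose, dotProduct_comm]

lemma quad_expand {d : ℕ} {W : Matrix (Fin d) (Fin d) ℝ} (hW : Wᵀ = W) (x v : Fin d → ℝ) :
    (x - v) ⬝ᵥ W *ᵥ (x - v) = x ⬝ᵥ W *ᵥ x - 2 * (x ⬝ᵥ W *ᵥ v) + v ⬝ᵥ W *ᵥ v := by
  rw [Matrix.mulVec_sub, sub_dotProduct, dotProduct_sub, dotProduct_sub,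
    dot_symm hW v x]
  ring
open scoped MatrixOrder
lemma gauss_integral {d : ℕ} {M : Matrix (Fin d) (Fin d) ℝ} (hM : M.PosDef) :
    ∫ x : Fin d → ℝ, Real.exp (-(1/2) * (x ⬝ᵥ M *ᵥ x)) =
      Real.sqrt (2 * Real.pi) ^ d / Real.sqrt M.det := by
  set S := CFC.sqrt M with hSdef
  have hSS : S * S = M := CFC.sqrt_mul_sqrt_self M (Matrix.nonneg_iff_posSemidef.mpr hM.posSemidef)
  have hSsymm : Sᵀ = S := transposeEq (Matrix.nonneg_iff_posSemidef.mp (CFC.sqrt_nonneg M)).1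
  have hdet2 : S.det ^ 2 = M.det := by
    rw [← hSS, Matrix.det_mul, sq]
  have hdetM : 0 < M.det := hM.det_pos
  have hdetS : S.det ≠ 0 := by
    intro h
    rw [← hdet2, h] at hdetM; simp at hdetM
  have habs : |S.det| = Real.sqrt M.det := by
    rw [← hdet2, Real.sqrt_sq_eq_abs]
  -- quadratic form via S
  have hquad : ∀ x : Fin d → ℝ, x ⬝ᵥ M *ᵥ x = (S *ᵥ x) ⬝ᵥ (S *ᵥ x) := by
    intro x
    rw [dot_mulVec_left, hSsymm, Matrix.mulVec_mulVec, hSS]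
  have hg : Continuous fun y : Fin d → ℝ => Real.exp (-(1/2) * (y ⬝ᵥ y)) := by
    apply Real.continuous_exp.comp
    apply Continuous.mul continuous_const
    exact continuous_finset_sum _ fun i _ => (continuous_apply i).mul (continuous_apply i)
  have hφ : Measurable (Matrix.toLin' S) :=
    (LinearMap.continuous_of_finiteDimensional _).measurable
  calc ∫ x : Fin d → ℝ, Real.exp (-(1/2) * (x ⬝ᵥ M *ᵥ x))
      = ∫ x : Fin d → ℝ, Real.exp (-(1/2) * ((Matrix.toLin' S x) ⬝ᵥ (Matrix.toLin' S x))) := by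
        congr 1; ext x; rw [hquad x, Matrix.toLin'_apply]
    _ = ∫ y, Real.exp (-(1/2) * (y ⬝ᵥ y)) ∂(Measure.map (Matrix.toLin' S) volume) :=
        (integral_map hφ.aemeasurable hg.aestronglyMeasurable).symm
    _ = ∫ y, Real.exp (-(1/2) * (y ⬝ᵥ y)) ∂((ENNReal.ofReal |S.det⁻¹|) • volume) := by
        rw [map_matrix_volume_pi_eq_smul_volume_pi hdetS]
    _ = |S.det⁻¹| * ∫ y : Fin d → ℝ, Real.exp (-(1/2) * (y ⬝ᵥ y)) := by
        rw [integral_smul_measure, ENNReal.toReal_ofReal (abs_nonneg _), smul_eq_mul]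
    _ = |S.det⁻¹| * ∫ y : Fin d → ℝ, ∏ i, Real.exp (-(1/2) * (y i)^2) := by
        congr 1; apply integral_congr_ae; filter_upwards with y
        rw [← Real.exp_sum]
        congr 1
        simp only [dotProduct, Finset.mul_sum]
        exact Finset.sum_congr rfl fun i _ => by ring
    _ = |S.det⁻¹| * (∫ v : ℝ, Real.exp (-(1/2) * v^2)) ^ d := by
        rw [MeasureTheory.volume_pi, integral_fintype_prod_eq_pow (fun v : ℝ => Real.exp (-(1/2) * v^2))]
        simp
    _ = Real.sqrt (2 * Real.pi) ^ d / Real.sqrt M.det := by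
        have : ∫ v : ℝ, Real.exp (-(1/2) * v^2) = Real.sqrt (2 * Real.pi) := by
          have := integral_gaussian (1/2 : ℝ)
          simp only [neg_mul] at this ⊢
          rw [this]
          norm_num [mul_comm]
        rw [this, abs_inv, habs, inv_mul_eq_div]
lemma herm_of_transpose {d : ℕ} {A : Matrix (Fin d) (Fin d) ℝ} (h : Aᵀ = A) : A.IsHermitian := by
  ext i j
  have := congrFun (congrFun h i) j
  simpa [Matrix.conjTranspose_apply] using this

lemma gauss_integral_shift {d : ℕ} {M : Matrix (Fin d) (Fin d) ℝ} (hM : M.PosDef) (m : Fin d → ℝ) :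
    ∫ x : Fin d → ℝ, Real.exp (-(1/2) * ((x - m) ⬝ᵥ M *ᵥ (x - m))) =
      Real.sqrt (2 * Real.pi) ^ d / Real.sqrt M.det := by
  rw [← gauss_integral hM]
  have := integral_add_right_eq_self (μ := (volume : Measure (Fin d → ℝ)))
      (fun y => Real.exp (-(1/2) * (y ⬝ᵥ M *ᵥ y))) (-m)
  simp only [← sub_eq_add_neg] at this
  exact this

lemma posDef_two_inv_sub {d : ℕ} {SA SB : Matrix (Fin d) (Fin d) ℝ}
    (hA : SA.PosDef) (hB : SB.PosDef) (hBA : ((2:ℝ) • SB - SA).PosDef) :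
    ((2:ℝ) • SA⁻¹ - SB⁻¹).PosDef := by
  have hAsymm : SAᵀ = SA := transposeEq hA.1
  have hAi : (SA⁻¹)ᵀ = SA⁻¹ := transposeEq hA.inv.1
  have hBi : (SB⁻¹)ᵀ = SB⁻¹ := transposeEq hB.inv.1
  refine Matrix.PosDef.of_dotProduct_mulVec_pos (herm_of_transpose ?_) ?_
  · rw [Matrix.transpose_sub, Matrix.transpose_smul, hAi, hBi]
  · intro x hx
    rw [star_trivial]
    set u := SA⁻¹ *ᵥ x with hu
    set v := SB⁻¹ *ᵥ x with hv
    have hxu : SA *ᵥ u = x := by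
      rw [hu, Matrix.mulVec_mulVec, Matrix.mul_nonsing_inv _ hA.det_pos.ne'.isUnit,
        Matrix.one_mulVec]
    have hxv : SB *ᵥ v = x := by
      rw [hv, Matrix.mulVec_mulVec, Matrix.mul_nonsing_inv _ hB.det_pos.ne'.isUnit,
        Matrix.one_mulVec]
    have hu0 : u ≠ 0 := fun h => hx (by rw [← hxu, h, Matrix.mulVec_zero])
    have hv0 : v ≠ 0 := fun h => hx (by rw [← hxv, h, Matrix.mulVec_zero])
    have hα : 0 < u ⬝ᵥ SA *ᵥ u := by simpa [star_trivial] using hA.dotProduct_mulVec_pos hu0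
    have h2 : 0 < v ⬝ᵥ ((2:ℝ) • SB - SA) *ᵥ v := by simpa [star_trivial] using hBA.dotProduct_mulVec_pos hv0
    have h2' : v ⬝ᵥ SA *ᵥ v < 2 * (v ⬝ᵥ SB *ᵥ v) := by
      rw [Matrix.sub_mulVec, Matrix.smul_mulVec, dotProduct_sub, dotProduct_smul] at h2
      simp only [smul_eq_mul] at h2
      linarith
    have hβ : v ⬝ᵥ SB *ᵥ v = u ⬝ᵥ SA *ᵥ v := by
      rw [hxv, ← hxu, dotProduct_comm, dot_mulVec_left, hAsymm, dot_symm hAsymm]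
    have key : (u ⬝ᵥ SA *ᵥ v)^2 ≤ (u ⬝ᵥ SA *ᵥ u) * (v ⬝ᵥ SA *ᵥ v) := by
      have hd := discrim_le_zero (a := v ⬝ᵥ SA *ᵥ v) (b := 2*(u ⬝ᵥ SA *ᵥ v))
        (c := u ⬝ᵥ SA *ᵥ u) ?_
      · unfold discrim at hd; nlinarith [hd]
      · intro t
        have h0 := hA.posSemidef.dotProduct_mulVec_nonneg (t • v + u)
        rw [star_trivial] at h0
        have hexp : (t • v + u) ⬝ᵥ SA *ᵥ (t • v + u)
            = (v ⬝ᵥ SA *ᵥ v) * (t*t) + (2*(u ⬝ᵥ SA *ᵥ v)) * t + u ⬝ᵥ SA *ᵥ u := by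
          rw [Matrix.mulVec_add, Matrix.mulVec_smul, dotProduct_add, add_dotProduct,
            add_dotProduct, dotProduct_smul, smul_dotProduct, smul_dotProduct,
            dotProduct_smul, dot_symm hAsymm v u]
          simp only [smul_eq_mul]
          ring
        rw [hexp] at h0
        exact h0
    rw [Matrix.sub_mulVec, Matrix.smul_mulVec, dotProduct_sub, dotProduct_smul]
    simp only [smul_eq_mul]
    rw [← hu, ← hv, ← hxu, dotProduct_comm (SA *ᵥ u) u, dot_mulVec_left SA u v, hAsymm]
    nlinarith [key, hα, h2', hβ, sq_nonneg (u ⬝ᵥ SA *ᵥ v)]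


/-- The multivariate normal density on `ℝ^d` with mean `m` and covariance `S`:
`N(x; m, S) = det(2πS)^{−1/2} exp(−(1/2)(x−m)ᵀ S⁻¹ (x−m))`. -/
noncomputable def gaussPdf {d : ℕ} (m : Fin d → ℝ) (S : Matrix (Fin d) (Fin d) ℝ)
    (x : Fin d → ℝ) : ℝ :=
  (Real.sqrt (((2 * Real.pi) • S).det))⁻¹ *
    Real.exp (-(1 / 2) * ((x - m) ⬝ᵥ (S⁻¹ *ᵥ (x - m))))

/-- **Closed form of the chi-squared divergence between two Gaussians.**
For symmetric positive definite `Σ_A, Σ_B` with `2Σ_B − Σ_A` positive definite,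
`χ²(N(μ_A, Σ_A) ‖ N(μ_B, Σ_B)) = ∫ N(x; μ_A, Σ_A)²/N(x; μ_B, Σ_B) dx − 1
  = det(Σ_B)/√(det(2Σ_B − Σ_A)·det(Σ_A)) · exp((μ_A−μ_B)ᵀ(2Σ_B−Σ_A)⁻¹(μ_A−μ_B)) − 1`. -/
theorem gaussian_chiSq_closed_form
    {d : ℕ} (μA μB : Fin d → ℝ) (SA SB : Matrix (Fin d) (Fin d) ℝ)
    (hA : SA.PosDef) (hB : SB.PosDef) (hBA : ((2 : ℝ) • SB - SA).PosDef) :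
    chiSq (gaussPdf μA SA) (gaussPdf μB SB)
      = SB.det / Real.sqrt (((2 : ℝ) • SB - SA).det * SA.det) *
          Real.exp ((μA - μB) ⬝ᵥ (((2 : ℝ) • SB - SA)⁻¹ *ᵥ (μA - μB))) - 1 := by
    -- abbreviations
  set C2 : Matrix (Fin d) (Fin d) ℝ := (2 : ℝ) • SB - SA with hC2def
  set D : Matrix (Fin d) (Fin d) ℝ := C2⁻¹ with hDdef
  set δ : Fin d → ℝ := μA - μB with hδdef
  set Mm : Matrix (Fin d) (Fin d) ℝ := (2 : ℝ) • SA⁻¹ - SB⁻¹ with hMmdef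
  set m : Fin d → ℝ := μA + (SA * D) *ᵥ δ with hmdef
  have uA : IsUnit SA.det := hA.det_pos.ne'.isUnit
  have uB : IsUnit SB.det := hB.det_pos.ne'.isUnit
  have uC : IsUnit C2.det := hBA.det_pos.ne'.isUnit
  have hA1 : SA * SA⁻¹ = 1 := Matrix.mul_nonsing_inv _ uA
  have hA2 : SA⁻¹ * SA = 1 := Matrix.nonsing_inv_mul _ uA
  have hB1 : SB * SB⁻¹ = 1 := Matrix.mul_nonsing_inv _ uB
  have hB2 : SB⁻¹ * SB = 1 := Matrix.nonsing_inv_mul _ uB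
  have hC1 : C2 * D = 1 := Matrix.mul_nonsing_inv _ uC
  have hC2i : D * C2 = 1 := Matrix.nonsing_inv_mul _ uC
  have hAsymm : SAᵀ = SA := transposeEq hA.1
  have hAisymm : (SA⁻¹)ᵀ = SA⁻¹ := transposeEq hA.inv.1
  have hBisymm : (SB⁻¹)ᵀ = SB⁻¹ := transposeEq hB.inv.1
  have hDsymm : Dᵀ = D := transposeEq hBA.inv.1
  have hMm_pd : Mm.PosDef := posDef_two_inv_sub hA hB hBA
  have hMsymm : Mmᵀ = Mm := transposeEq hMm_pd.1
  -- matrix identities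
  have M_eq : SB⁻¹ * C2 * SA⁻¹ = Mm := by
    rw [hC2def, Matrix.mul_sub, mul_smul_comm, hB2, Matrix.sub_mul, smul_mul_assoc,
      Matrix.one_mul, Matrix.mul_assoc, hA1, Matrix.mul_one, hMmdef]
  have hdetM : Mm.det = C2.det / (SA.det * SB.det) := by
    rw [← M_eq, Matrix.det_mul, Matrix.det_mul, Matrix.det_nonsing_inv, Matrix.det_nonsing_inv]
    simp only [Ring.inverse_eq_inv']
    field_simp
  have hSA_eq : (2 : ℝ) • SB - C2 = SA := by rw [hC2def]; abel
  have I1 : Mm * (SA * D) = SB⁻¹ := by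
    rw [← M_eq, Matrix.mul_assoc, ← Matrix.mul_assoc SA⁻¹ SA D, hA2, Matrix.one_mul,
      Matrix.mul_assoc, hC1, Matrix.mul_one]
  have I2 : D * SA * SB⁻¹ = (2 : ℝ) • D - SB⁻¹ := by
    rw [← hSA_eq, Matrix.mul_sub, mul_smul_comm, Matrix.sub_mul, smul_mul_assoc,
      Matrix.mul_assoc, hB1, Matrix.mul_one, hC2i, Matrix.one_mul]
  have I3 : D * SA * SA⁻¹ = D := by rw [Matrix.mul_assoc, hA1, Matrix.mul_one]
  -- vector facts
  have f1 : Mm *ᵥ m = (2 : ℝ) • (SA⁻¹ *ᵥ μA) - SB⁻¹ *ᵥ μB := by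
    rw [hmdef, Matrix.mulVec_add, Matrix.mulVec_mulVec, I1, hMmdef, Matrix.sub_mulVec,
      Matrix.smul_mulVec, hδdef, Matrix.mulVec_sub]
    abel
  have g1 : (D * SA) *ᵥ (Mm *ᵥ m) = (2 : ℝ) • (D *ᵥ δ) + SB⁻¹ *ᵥ μB := by
    rw [f1, Matrix.mulVec_sub, Matrix.mulVec_smul, Matrix.mulVec_mulVec, Matrix.mulVec_mulVec,
      I3, I2, Matrix.sub_mulVec, Matrix.smul_mulVec, hδdef, Matrix.mulVec_sub,
      smul_sub]
    abel
  have e1 : ∀ x, x ⬝ᵥ Mm *ᵥ x = 2 * (x ⬝ᵥ SA⁻¹ *ᵥ x) - x ⬝ᵥ SB⁻¹ *ᵥ x := by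
    intro x
    rw [hMmdef, Matrix.sub_mulVec, Matrix.smul_mulVec, dotProduct_sub, dotProduct_smul,
      smul_eq_mul]
  have e2 : ∀ x, x ⬝ᵥ Mm *ᵥ m = 2 * (x ⬝ᵥ SA⁻¹ *ᵥ μA) - x ⬝ᵥ SB⁻¹ *ᵥ μB := by
    intro x
    rw [f1, dotProduct_sub, dotProduct_smul, smul_eq_mul]
  have e4 : δ ⬝ᵥ SB⁻¹ *ᵥ μB = μA ⬝ᵥ SB⁻¹ *ᵥ μB - μB ⬝ᵥ SB⁻¹ *ᵥ μB := by
    rw [hδdef, sub_dotProduct]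
  have e3 : m ⬝ᵥ Mm *ᵥ m = 2 * (μA ⬝ᵥ SA⁻¹ *ᵥ μA) - μA ⬝ᵥ SB⁻¹ *ᵥ μB
      + 2 * (δ ⬝ᵥ D *ᵥ δ) + δ ⬝ᵥ SB⁻¹ *ᵥ μB := by
    have hsecond : ((SA * D) *ᵥ δ) ⬝ᵥ (Mm *ᵥ m) = δ ⬝ᵥ ((D * SA) *ᵥ (Mm *ᵥ m)) := by
      rw [dot_mulVec_left, Matrix.transpose_mul, hDsymm, hAsymm]
    calc m ⬝ᵥ Mm *ᵥ m = μA ⬝ᵥ (Mm *ᵥ m) + ((SA * D) *ᵥ δ) ⬝ᵥ (Mm *ᵥ m) := by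
          rw [hmdef, add_dotProduct]
      _ = (2 * (μA ⬝ᵥ SA⁻¹ *ᵥ μA) - μA ⬝ᵥ SB⁻¹ *ᵥ μB)
          + (2 * (δ ⬝ᵥ D *ᵥ δ) + δ ⬝ᵥ SB⁻¹ *ᵥ μB) := by
          rw [hsecond, g1, f1, dotProduct_sub, dotProduct_smul, dotProduct_add,
            dotProduct_smul, smul_eq_mul, smul_eq_mul]
      _ = _ := by ring
  -- pointwise exponent identity
  have expo : ∀ x : Fin d → ℝ,
      2 * (-(1/2) * ((x - μA) ⬝ᵥ SA⁻¹ *ᵥ (x - μA)))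
        - (-(1/2) * ((x - μB) ⬝ᵥ SB⁻¹ *ᵥ (x - μB)))
      = -(1/2) * ((x - m) ⬝ᵥ Mm *ᵥ (x - m)) + δ ⬝ᵥ D *ᵥ δ := by
    intro x
    rw [quad_expand hAisymm, quad_expand hBisymm, quad_expand hMsymm, e1 x, e2 x, e3, e4]
    ring
  -- constants
  have hcard : Fintype.card (Fin d) = d := Fintype.card_fin d
  have h2pi : (0:ℝ) < (2 * Real.pi) ^ d := by positivity
  have hdetA1 : ((2 * Real.pi) • SA).det = (2 * Real.pi) ^ d * SA.det := by
    rw [Matrix.det_smul, hcard]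
  have hdetB1 : ((2 * Real.pi) • SB).det = (2 * Real.pi) ^ d * SB.det := by
    rw [Matrix.det_smul, hcard]
  have hc1pos : (0:ℝ) < Real.sqrt (((2 * Real.pi) • SA).det) := by
    rw [hdetA1]; exact Real.sqrt_pos.mpr (mul_pos h2pi hA.det_pos)
  have hc2pos : (0:ℝ) < Real.sqrt (((2 * Real.pi) • SB).det) := by
    rw [hdetB1]; exact Real.sqrt_pos.mpr (mul_pos h2pi hB.det_pos)
  set c1 : ℝ := Real.sqrt (((2 * Real.pi) • SA).det) with hc1def
  set c2 : ℝ := Real.sqrt (((2 * Real.pi) • SB).det) with hc2def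
  set K : ℝ := (c1^2)⁻¹ * c2 * Real.exp (δ ⬝ᵥ D *ᵥ δ) with hKdef
  -- pointwise integrand identity
  have integrand : ∀ x : Fin d → ℝ,
      (gaussPdf μA SA x)^2 / gaussPdf μB SB x
        = K * Real.exp (-(1/2) * ((x - m) ⬝ᵥ Mm *ᵥ (x - m))) := by
    intro x
    unfold gaussPdf
    rw [div_eq_mul_inv, mul_inv, inv_inv, mul_pow, inv_pow]
    have hE : Real.exp (-(1 / 2) * ((x - μA) ⬝ᵥ SA⁻¹ *ᵥ (x - μA))) ^ 2
        * (Real.exp (-(1 / 2) * ((x - μB) ⬝ᵥ SB⁻¹ *ᵥ (x - μB))))⁻¹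
        = Real.exp (-(1/2) * ((x - m) ⬝ᵥ Mm *ᵥ (x - m))) * Real.exp (δ ⬝ᵥ D *ᵥ δ) := by
      rw [sq, ← Real.exp_add, ← Real.exp_neg, ← Real.exp_add, ← Real.exp_add]
      congr 1
      have := expo x
      linarith [expo x]
    rw [hKdef]
    calc (c1 ^ 2)⁻¹ * Real.exp (-(1 / 2) * ((x - μA) ⬝ᵥ SA⁻¹ *ᵥ (x - μA))) ^ 2
          * (c2 * (Real.exp (-(1 / 2) * ((x - μB) ⬝ᵥ SB⁻¹ *ᵥ (x - μB))))⁻¹)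
        = (c1 ^ 2)⁻¹ * c2 * (Real.exp (-(1 / 2) * ((x - μA) ⬝ᵥ SA⁻¹ *ᵥ (x - μA))) ^ 2
            * (Real.exp (-(1 / 2) * ((x - μB) ⬝ᵥ SB⁻¹ *ᵥ (x - μB))))⁻¹) := by ring
      _ = _ := by rw [hE]; ring
  -- compute the integral
  have hint : ∫ x : Fin d → ℝ, (gaussPdf μA SA x)^2 / gaussPdf μB SB x
      = K * (Real.sqrt (2 * Real.pi) ^ d / Real.sqrt Mm.det) := by
    rw [integral_congr_ae (Filter.Eventually.of_forall integrand)]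
    rw [MeasureTheory.integral_const_mul, gauss_integral_shift hMm_pd m]
  -- final arithmetic
  rw [chiSq, hint]
  congr 1
  have hsqA : Real.sqrt SA.det ^ 2 = SA.det := Real.sq_sqrt hA.det_pos.le
  have hsqB : Real.sqrt SB.det ^ 2 = SB.det := Real.sq_sqrt hB.det_pos.le
  have hsqC : Real.sqrt C2.det ^ 2 = C2.det := Real.sq_sqrt hBA.det_pos.le
  have hap : (0:ℝ) < Real.sqrt SA.det := Real.sqrt_pos.mpr hA.det_pos
  have hbp : (0:ℝ) < Real.sqrt SB.det := Real.sqrt_pos.mpr hB.det_pos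
  have hcp : (0:ℝ) < Real.sqrt C2.det := Real.sqrt_pos.mpr hBA.det_pos
  have hpp : (0:ℝ) < Real.sqrt ((2*Real.pi) ^ d) := Real.sqrt_pos.mpr h2pi
  have hc1 : c1 = Real.sqrt ((2*Real.pi) ^ d) * Real.sqrt SA.det := by
    rw [hc1def, hdetA1, Real.sqrt_mul h2pi.le]
  have hc2 : c2 = Real.sqrt ((2*Real.pi) ^ d) * Real.sqrt SB.det := by
    rw [hc2def, hdetB1, Real.sqrt_mul h2pi.le]
  have hsqrtpow : Real.sqrt (2*Real.pi) ^ d = Real.sqrt ((2*Real.pi) ^ d) := by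
    rw [← Real.sqrt_sq (show (0:ℝ) ≤ (Real.sqrt (2*Real.pi))^d by positivity)]
    congr 1
    rw [← pow_mul, mul_comm d 2, pow_mul, Real.sq_sqrt (by positivity)]
  have hsqrtM : Real.sqrt Mm.det
      = Real.sqrt C2.det / (Real.sqrt SA.det * Real.sqrt SB.det) := by
    rw [hdetM, Real.sqrt_div hBA.det_pos.le, Real.sqrt_mul hA.det_pos.le]
  have hsqrtCA : Real.sqrt (C2.det * SA.det) = Real.sqrt C2.det * Real.sqrt SA.det := by
    rw [Real.sqrt_mul hBA.det_pos.le]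
  rw [hKdef, hc1, hc2, hsqrtpow, hsqrtM, hsqrtCA, ← hsqB]
  field_simp
  ring
  rw [Real.sq_sqrt (by positivity)]
end
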